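/- arXiv:0904.2759 — 2 statements merged into one kernel-verified Lean document; each statement's English description precedes it below -/
import Mathlib

section
/- Let P be a span program on n boolean variables with data (V, t, A, Π(·)) as below, let x ∈ {0,1}^n and s ∈ [0,∞)^n. Consider the following system in unknowns ψ_V ∈ V, ψ_I ∈ ℂ^I, ψ_0 ∈ ℂ, φ_I ∈ ℂ^I (the eigenvalue-zero eigenvector equations of the span-program graph, omitting the output constraint): (a) ψ_0 t + A φ_I = 0; (b) (1 − Π(x)) φ_I = 0; (d) A† ψ_V + (1 − Π(x)) ψ_I = 0. Then: (i) the system has a solution with ψ_0 ≠ 0 if and only if f_P(x) = 1, and it has a solution with ⟨t, ψ_V⟩ ≠ 0 if and only if f_P(x) = 0. Quantitatively: (ii) if f_P(x) = 1, there is a solution with ψ_V = 0 and ψ_I = 0 satisfying |ψ_0|² / (|ψ_0|² + ‖S φ_I‖²) ≥ 1 / (1 + wsize_s(P, x)); (iii) if f_P(x) = 0 and w' ∈ V is an optimal witness (⟨t, w'⟩ = 1, Π(x) A† w' = 0, ‖S A† w'‖² = wsize_s(P, x)), there is a solution with ψ_0 = 0 and φ_I = 0 satisfying |⟨t, ψ_V⟩|²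 / (‖ψ_V‖² + ‖S ψ_I‖²) ≥ 1 / (‖w'‖² + wsize_s(P, x)). -/
open scoped ComplexInnerProductSpace

/-- A span program on `n` boolean variables: an inner product space `ℂ^d`, a target vector,
and input vectors indexed by `Fin m`, each either free (`label i = none`) or labeled by a
pair `(j, b)` (`label i = some (j, b)`, meaning `i ∈ I_{j,b}`). -/
structure SpanProgram (n : ℕ) : Type where
  d : ℕ
  m : ℕ
  label : Fin m → Option (Fin n × Bool)
  target : EuclideanSpace ℂ (Fin d)
  input : Fin m → EuclideanSpace ℂ (Fin d)

namespace SpanProgram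

variable {n : ℕ}

/-- Input vector `i` is available on input `x`: it is free, or labeled `(j, x_j)` for some `j`. -/
def avail (P : SpanProgram n) (x : Fin n → Bool) (i : Fin P.m) : Prop :=
  P.label i = none ∨ ∃ j : Fin n, P.label i = some (j, x j)

instance (P : SpanProgram n) (x : Fin n → Bool) (i : Fin P.m) : Decidable (P.avail x i) :=
  inferInstanceAs (Decidable (P.label i = none ∨ ∃ j : Fin n, P.label i = some (j, x j)))

/-- The boolean function computed by `P`:  `f_P(x) = 1` iff the target is in the range of
`A ∘ Π(x)`, i.e. the target is a linear combination of the available input vectors. -/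
def eval (P : SpanProgram n) (x : Fin n → Bool) : Prop :=
  ∃ w : Fin P.m → ℂ, ∑ i, (if P.avail x i then w i else 0) • P.input i = P.target

/-- The squared cost weight of coordinate `i`:  `s j` if `i ∈ I_{j,b}`, and `0` if `i` is free.
Thus `‖S w‖² = ∑ i, P.cw s i * ‖w i‖²`. -/
def cw (P : SpanProgram n) (s : Fin n → ℝ) (i : Fin P.m) : ℝ :=
  match P.label i with
  | none => 0
  | some jb => s jb.1

open Classical in
/-- The witness size of `P` on input `x` with costs `s`. -/
noncomputable def wsizex (P : SpanProgram n) (s : Fin n → ℝ) (x : Fin n → Bool) : ℝ :=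
  if P.eval x then
    sInf { r : ℝ | ∃ w : Fin P.m → ℂ,
      (∑ i, (if P.avail x i then w i else 0) • P.input i = P.target) ∧
      r = ∑ i, P.cw s i * ‖w i‖ ^ 2 }
  else
    sInf { r : ℝ | ∃ w' : EuclideanSpace ℂ (Fin P.d), ⟪P.target, w'⟫ = 1 ∧
      (∀ i, P.avail x i → ⟪P.input i, w'⟫ = 0) ∧
      r = ∑ i, P.cw s i * ‖⟪P.input i, w'⟫‖ ^ 2 }

/-- The witness size of `P` with costs `s`, restricted to the domain `D`:
`max_{x ∈ D} wsize_s(P, x)`. -/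
noncomputable def wsizeD (P : SpanProgram n) (s : Fin n → ℝ) (D : Set (Fin n → Bool)) : ℝ :=
  sSup { r : ℝ | ∃ x ∈ D, r = P.wsizex s x }

end SpanProgram

/-!
The system decouples. Equations (a), (b) involve only `(ψ₀, φ_I)` and say that `-φ_I / ψ₀` is a
positive witness supported on the available coordinates; equation (d) involves only
`(ψ_V, ψ_I)` and, once solved for `ψ_I`, says that `ψ_V` is orthogonal to the available input
vectors. Hence a solution with `ψ₀ ≠ 0` exists iff `t` lies in the span `M` of the available
inputs, and one with `⟪t, ψ_V⟫ ≠ 0` exists iff `t ∉ M = Mᗮᗮ`. For (ii) take an optimal positive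
witness: minimising `‖S w‖` over the affine space `A Π(x) w = t` is an orthogonal projection onto
`S (ker A Π(x))`, so the infimum defining the witness size is attained. For (iii) take `ψ_V = w'`.
-/

open scoped InnerProductSpace

namespace Submodule

variable {𝕜 E : Type*} [RCLike 𝕜] [NormedAddCommGroup E] [InnerProductSpace 𝕜 E]

theorem norm_sub_starProjection_le (U : Submodule 𝕜 E) [U.HasOrthogonalProjection] (y : E)
    {u : E} (hu : u ∈ U) : ‖y - U.starProjection y‖ ≤ ‖y - u‖ := by
  rw [starProjection_minimal]
  exact ciInf_le ⟨0, Set.forall_mem_range.2 fun _ => norm_nonneg _⟩ (⟨u, hu⟩ : U)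

theorem notMem_iff_exists_mem_orthogonal_inner_ne_zero (K : Submodule 𝕜 E)
    [K.HasOrthogonalProjection] {t : E} : t ∉ K ↔ ∃ v ∈ Kᗮ, ⟪t, v⟫_𝕜 ≠ 0 := by
  constructor
  · intro ht
    by_contra! h
    exact ht <| K.orthogonal_orthogonal ▸ fun v hv => inner_eq_zero_symm.1 (h v hv)
  · rintro ⟨v, hv, htv⟩ ht
    exact htv (inner_right_of_mem_orthogonal ht hv)

theorem mem_orthogonal_span_range_iff {ι : Type*} (g : ι → E) (v : E) :
    v ∈ (span 𝕜 (Set.range g))ᗮ ↔ ∀ i, ⟪g i, v⟫_𝕜 = 0 := by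
  have hle : v ∈ (span 𝕜 (Set.range g))ᗮ ↔ span 𝕜 (Set.range g) ≤ (𝕜 ∙ v)ᗮ := by
    rw [mem_orthogonal, SetLike.le_def]
    simp only [mem_orthogonal_singleton_iff_inner_left]
  rw [hle, span_le, Set.range_subset_iff]
  simp only [SetLike.mem_coe, mem_orthogonal_singleton_iff_inner_left]

end Submodule

theorem LinearMap.exists_forall_norm_le_of_mem_range {𝕜 E F G : Type*} [RCLike 𝕜]
    [AddCommGroup E] [Module 𝕜 E] [FiniteDimensional 𝕜 E] [AddCommGroup F] [Module 𝕜 F]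
    [NormedAddCommGroup G] [InnerProductSpace 𝕜 G] (A : E →ₗ[𝕜] F) (S : E →ₗ[𝕜] G) {t : F}
    (ht : t ∈ LinearMap.range A) : ∃ w, A w = t ∧ ∀ w', A w' = t → ‖S w‖ ≤ ‖S w'‖ := by
  obtain ⟨w₀, rfl⟩ := ht
  let U := (LinearMap.ker A).map S
  obtain ⟨k, hk, hSk⟩ := Submodule.mem_map.1 (U.starProjection_apply_mem (S w₀))
  refine ⟨w₀ - k, by simp [LinearMap.mem_ker.1 hk], fun w hw => ?_⟩
  calc ‖S (w₀ - k)‖ = ‖S w₀ - U.starProjection (S w₀)‖ := by rw [map_sub, hSk]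
    _ ≤ ‖S w₀ - S (w₀ - w)‖ :=
      U.norm_sub_starProjection_le _ (Submodule.mem_map_of_mem (by simp [hw]))
    _ = ‖S w‖ := by rw [map_sub, sub_sub_cancel]

namespace SpanProgram

variable {n : ℕ} (P : SpanProgram n) (x : Fin n → Bool) {s : Fin n → ℝ}

/-- The columns of `A ∘ Π(x)`. -/
def availInput (i : Fin P.m) : EuclideanSpace ℂ (Fin P.d) :=
  if P.avail x i then P.input i else 0

theorem ite_smul_input (w : Fin P.m → ℂ) (i : Fin P.m) :
    (if P.avail x i then w i else 0) • P.input i = w i • P.availInput x i := by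
  unfold availInput
  split_ifs <;> simp

theorem eval_iff_mem_range :
    P.eval x ↔ P.target ∈ LinearMap.range (Fintype.linearCombination ℂ (P.availInput x)) := by
  simp only [eval, ite_smul_input, LinearMap.mem_range, Fintype.linearCombination_apply]

theorem eval_iff_mem_span :
    P.eval x ↔ P.target ∈ Submodule.span ℂ (Set.range (P.availInput x)) := by
  rw [eval_iff_mem_range, Fintype.range_linearCombination]

theorem mem_orthogonal_span_availInput_iff (v : EuclideanSpace ℂ (Fin P.d)) :
    v ∈ (Submodule.span ℂ (Set.range (P.availInput x)))ᗮ ↔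
      ∀ i, P.avail x i → ⟪P.input i, v⟫ = 0 := by
  rw [Submodule.mem_orthogonal_span_range_iff]
  refine forall_congr' fun i => ?_
  unfold availInput
  split_ifs with h <;> simp [h]

/-- Equations (a) and (b). -/
def IsPrimalSol (ψ₀ : ℂ) (φ : Fin P.m → ℂ) : Prop :=
  ψ₀ • P.target + ∑ i, φ i • P.input i = 0 ∧ ∀ i, ¬ P.avail x i → φ i = 0

/-- Equation (d). -/
def IsDualSol (ψV : EuclideanSpace ℂ (Fin P.d)) (ψI : Fin P.m → ℂ) : Prop :=
  ∀ i, ⟪P.input i, ψV⟫ + (if P.avail x i then 0 else ψI i) = 0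

theorem isPrimalSol_of_witness {w : Fin P.m → ℂ}
    (hw : ∑ i, (if P.avail x i then w i else 0) • P.input i = P.target) :
    P.IsPrimalSol x 1 (fun i => -(if P.avail x i then w i else 0)) := by
  refine ⟨?_, fun i hi => by simp [hi]⟩
  simp only [one_smul, neg_smul, Finset.sum_neg_distrib, hw, add_neg_cancel]

theorem IsPrimalSol.eval {ψ₀ : ℂ} {φ : Fin P.m → ℂ} (h : P.IsPrimalSol x ψ₀ φ) (hψ₀ : ψ₀ ≠ 0) :
    P.eval x := by
  refine ⟨fun i => -ψ₀⁻¹ * φ i, ?_⟩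
  have hφ : ∀ i, (if P.avail x i then -ψ₀⁻¹ * φ i else 0) = -ψ₀⁻¹ * φ i := fun i => by
    split_ifs with hi
    · rfl
    · simp [h.2 i hi]
  calc ∑ i, (if P.avail x i then -ψ₀⁻¹ * φ i else 0) • P.input i
      = -ψ₀⁻¹ • ∑ i, φ i • P.input i := by simp only [hφ, Finset.smul_sum, smul_smul]
    _ = P.target := by
      rw [eq_neg_of_add_eq_zero_right h.1, smul_neg, smul_smul, neg_mul,
        inv_mul_cancel₀ hψ₀, neg_smul, one_smul, neg_neg]

theorem eval_iff_exists_isPrimalSol : P.eval x ↔ ∃ ψ₀ φ, P.IsPrimalSol x ψ₀ φ ∧ ψ₀ ≠ 0 :=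
  ⟨fun ⟨_, hw⟩ => ⟨1, _, P.isPrimalSol_of_witness x hw, one_ne_zero⟩,
    fun ⟨_, _, h, hψ₀⟩ => h.eval P x hψ₀⟩

theorem isDualSol_of_orthogonal {v : EuclideanSpace ℂ (Fin P.d)}
    (hv : ∀ i, P.avail x i → ⟪P.input i, v⟫ = 0) :
    P.IsDualSol x v (fun i => -⟪P.input i, v⟫) := fun i => by
  split_ifs with hi
  · rw [hv i hi, add_zero]
  · exact add_neg_cancel _

theorem IsDualSol.inner_input_eq_zero {ψV : EuclideanSpace ℂ (Fin P.d)} {ψI : Fin P.m → ℂ}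
    (h : P.IsDualSol x ψV ψI) (i : Fin P.m) (hi : P.avail x i) : ⟪P.input i, ψV⟫ = 0 := by
  simpa [hi] using h i

theorem not_eval_iff_exists_isDualSol :
    ¬ P.eval x ↔ ∃ ψV ψI, P.IsDualSol x ψV ψI ∧ ⟪P.target, ψV⟫ ≠ 0 := by
  rw [eval_iff_mem_span, Submodule.notMem_iff_exists_mem_orthogonal_inner_ne_zero]
  simp only [mem_orthogonal_span_availInput_iff]
  constructor
  · rintro ⟨v, hv, htv⟩
    exact ⟨v, _, P.isDualSol_of_orthogonal x hv, htv⟩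
  · rintro ⟨ψV, _, h, htψ⟩
    exact ⟨ψV, h.inner_input_eq_zero, htψ⟩

/-- `‖S w‖²`. -/
noncomputable def cost (s : Fin n → ℝ) (w : Fin P.m → ℂ) : ℝ :=
  ∑ i, P.cw s i * ‖w i‖ ^ 2

theorem cw_nonneg (hs : ∀ j, 0 ≤ s j) (i : Fin P.m) : 0 ≤ P.cw s i := by
  unfold cw
  split
  · exact le_rfl
  · exact hs _

theorem cost_nonneg (hs : ∀ j, 0 ≤ s j) (w : Fin P.m → ℂ) : 0 ≤ P.cost s w :=
  Finset.sum_nonneg fun i _ => mul_nonneg (P.cw_nonneg hs i) (sq_nonneg _)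

theorem cost_le_cost_of_norm_le (hs : ∀ j, 0 ≤ s j) {v w : Fin P.m → ℂ} (h : ∀ i, ‖v i‖ ≤ ‖w i‖) :
    P.cost s v ≤ P.cost s w :=
  Finset.sum_le_sum fun i _ => by have := P.cw_nonneg hs i; gcongr; exact h i

/-- The operator `S`. -/
noncomputable def costMap (s : Fin n → ℝ) : (Fin P.m → ℂ) →ₗ[ℂ] EuclideanSpace ℂ (Fin P.m) :=
  (WithLp.linearEquiv 2 ℂ (Fin P.m → ℂ)).symm.toLinearMap ∘ₗ
    LinearMap.pi fun i => ((√(P.cw s i) : ℝ) : ℂ) • LinearMap.proj i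

theorem norm_costMap_sq (hs : ∀ j, 0 ≤ s j) (w : Fin P.m → ℂ) :
    ‖P.costMap s w‖ ^ 2 = P.cost s w := by
  rw [EuclideanSpace.norm_sq_eq]
  refine Finset.sum_congr rfl fun i _ => ?_
  simp [costMap, mul_pow, Real.sq_sqrt (P.cw_nonneg hs i)]

theorem exists_witness_cost_eq_wsizex (hs : ∀ j, 0 ≤ s j) (hx : P.eval x) :
    ∃ w, ∑ i, (if P.avail x i then w i else 0) • P.input i = P.target ∧
      P.cost s w = P.wsizex s x := by
  obtain ⟨w, hw, hmin⟩ :=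
    (Fintype.linearCombination ℂ (P.availInput x)).exists_forall_norm_le_of_mem_range
      (P.costMap s) ((P.eval_iff_mem_range x).1 hx)
  simp only [Fintype.linearCombination_apply, ← ite_smul_input] at hw hmin
  refine ⟨w, hw, ?_⟩
  rw [wsizex, if_pos hx]
  refine (IsLeast.csInf_eq ?_).symm
  refine ⟨⟨w, hw, rfl⟩, ?_⟩
  rintro _ ⟨w', hw', rfl⟩
  change P.cost s w ≤ P.cost s w'
  rw [← P.norm_costMap_sq hs, ← P.norm_costMap_sq hs]
  exact pow_le_pow_left₀ (norm_nonneg _) (hmin w' hw') 2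

end SpanProgram

/-- eigenvalue-zero analysis of the span-program graph.  Consider the
eigenvalue-zero eigenvector equations of `A_{G_P(x)}`, omitting the constraint at the output
vertex — equations (a) `ψ₀ t + A φ_I = 0`, (b) `(1 − Π(x)) φ_I = 0`,
(d) `A† ψ_V + (1 − Π(x)) ψ_I = 0` in unknowns `ψ_V, ψ_I, ψ₀, φ_I`.  Then: (i) a solution with
`ψ₀ ≠ 0` exists iff `f_P(x) = 1`, and a solution with `⟪t, ψ_V⟫ ≠ 0` exists iff `f_P(x) = 0`;
(ii) if `f_P(x) = 1` there is a solution with `ψ_V = 0`, `ψ_I = 0` whose squared overlap on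
the output vertex is at least `1/(1 + wsize_s(P,x))`; (iii) if `f_P(x) = 0` and `w'` is an
optimal witness, there is a solution with `ψ₀ = 0`, `φ_I = 0` satisfying
`|⟪t, ψ_V⟫|²/(‖ψ_V‖² + ‖S ψ_I‖²) ≥ 1/(‖w'‖² + wsize_s(P,x))`. -/
theorem spanProgram_graph_zero_eigenvector (n : ℕ) (P : SpanProgram n)
    (x : Fin n → Bool) (s : Fin n → ℝ) (hs : ∀ j, 0 ≤ s j) :
    -- (i), true case:
    ((∃ (ψV : EuclideanSpace ℂ (Fin P.d)) (ψI : Fin P.m → ℂ) (ψ0 : ℂ) (φI : Fin P.m → ℂ),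
        (ψ0 • P.target + ∑ i, φI i • P.input i = 0) ∧
        (∀ i, ¬ P.avail x i → φI i = 0) ∧
        (∀ i, ⟪P.input i, ψV⟫ + (if P.avail x i then 0 else ψI i) = 0) ∧
        ψ0 ≠ 0)
      ↔ P.eval x) ∧
    -- (i), false case:
    ((∃ (ψV : EuclideanSpace ℂ (Fin P.d)) (ψI : Fin P.m → ℂ) (ψ0 : ℂ) (φI : Fin P.m → ℂ),
        (ψ0 • P.target + ∑ i, φI i • P.input i = 0) ∧
        (∀ i, ¬ P.avail x i → φI i = 0) ∧
        (∀ i, ⟪P.input i, ψV⟫ + (if P.avail x i then 0 else ψI i) = 0) ∧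
        ⟪P.target, ψV⟫ ≠ 0)
      ↔ ¬ P.eval x) ∧
    -- (ii):
    (P.eval x →
      ∃ (ψ0 : ℂ) (φI : Fin P.m → ℂ),
        (ψ0 • P.target + ∑ i, φI i • P.input i = 0) ∧
        (∀ i, ¬ P.avail x i → φI i = 0) ∧
        1 / (1 + P.wsizex s x)
          ≤ ‖ψ0‖ ^ 2 / (‖ψ0‖ ^ 2 + ∑ i, P.cw s i * ‖φI i‖ ^ 2)) ∧
    -- (iii):
    (¬ P.eval x →
      ∀ w' : EuclideanSpace ℂ (Fin P.d),
        ⟪P.target, w'⟫ = 1 →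
        (∀ i, P.avail x i → ⟪P.input i, w'⟫ = 0) →
        (∑ i, P.cw s i * ‖⟪P.input i, w'⟫‖ ^ 2) = P.wsizex s x →
        ∃ (ψV : EuclideanSpace ℂ (Fin P.d)) (ψI : Fin P.m → ℂ),
          (∀ i, ⟪P.input i, ψV⟫ + (if P.avail x i then 0 else ψI i) = 0) ∧
          1 / (‖w'‖ ^ 2 + P.wsizex s x)
            ≤ ‖⟪P.target, ψV⟫‖ ^ 2 / (‖ψV‖ ^ 2 + ∑ i, P.cw s i * ‖ψI i‖ ^ 2)) := by
  refine ⟨?_, ?_, fun hx => ?_, fun _ w' htw' hw' hopt => ?_⟩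
  · rw [P.eval_iff_exists_isPrimalSol x]
    constructor
    · rintro ⟨-, -, ψ₀, φ, ha, hb, -, hψ₀⟩
      exact ⟨ψ₀, φ, ⟨ha, hb⟩, hψ₀⟩
    · rintro ⟨ψ₀, φ, ⟨ha, hb⟩, hψ₀⟩
      exact ⟨0, 0, ψ₀, φ, ha, hb, by simp, hψ₀⟩
  · rw [P.not_eval_iff_exists_isDualSol x]
    constructor
    · rintro ⟨ψV, ψI, -, -, -, -, hd, ht⟩
      exact ⟨ψV, ψI, hd, ht⟩
    · rintro ⟨ψV, ψI, hd, ht⟩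
      exact ⟨ψV, ψI, 0, 0, by simp, by simp, hd, ht⟩
  · obtain ⟨w, hw, hcost⟩ := P.exists_witness_cost_eq_wsizex x hs hx
    obtain ⟨ha, hb⟩ := P.isPrimalSol_of_witness x hw
    refine ⟨1, _, ha, hb, ?_⟩
    have hφ : P.cost s (fun i => -(if P.avail x i then w i else 0)) ≤ P.cost s w :=
      P.cost_le_cost_of_norm_le hs fun i => by split_ifs <;> simp
    rw [norm_one, one_pow]
    exact one_div_le_one_div_of_le (add_pos_of_pos_of_nonneg one_pos (P.cost_nonneg hs _))
      (add_le_add_right (hφ.trans hcost.le) 1)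
  · refine ⟨w', _, P.isDualSol_of_orthogonal x hw', ?_⟩
    simp only [htw', norm_neg, hopt, norm_one, one_pow, le_refl]
end

section
/- Let P be a span program on n boolean variables with data (V, t, A, Π(·)) as below, and for x ∈ {0,1}^n let A_{G_P(x)} be the self-adjoint operator on (V ⊕ ℂ^I) ⊕ (ℂ ⊕ ℂ^I) given by A_{G_P(x)}((ψ_V, ψ_I), (ψ_0, φ_I)) = ((ψ_0 t + A φ_I, (1 − Π(x)) φ_I), (⟨t, ψ_V⟩, A† ψ_V + (1 − Π(x)) ψ_I)), and let e_0 denote the unit vector on the ℂ coordinate (the output vertex). Then: (i) if f_P(x) = 1 and w ∈ ℂ^I is a witness (A Π(x) w = t), then A_{G_P(x)} has an eigenvalue-zero eigenvector ψ with |⟨e_0, ψ⟩|² / ‖ψ‖² ≥ 1 / (1 + ‖w‖²); (ii) if f_P(x) = 0 and w' ∈ V is a witness (⟨t, w'⟩ = 1 and Π(x) A† w' = 0), then for any orthonormal basis (α) of eigenvectors of A_{G_P(x)} with eigenvalues ρ(α) and any Υ ≥ 0, ∑_{α : |ρ(α)| ≤ Υ} |⟨α, e_0⟩|² ≤ 8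 Υ² (‖w'‖² + ‖A† w'‖²). -/
open scoped ComplexInnerProductSpace

open Matrix

namespace SpanProgram

variable {n : ℕ}

/-- The vertex set of the graph `G_P(x)`:  `(V ⊕ ℂ^I) ⊕ (ℂ ⊕ ℂ^I)`. -/
abbrev vtx (P : SpanProgram n) : Type := (Fin P.d ⊕ Fin P.m) ⊕ (Unit ⊕ Fin P.m)

/-- The biadjacency matrix `[[t, A], [0, 1 − Π(x)]]` of the graph `G_P(x)`. -/
noncomputable def biadj (P : SpanProgram n) (x : Fin n → Bool) :
    Matrix (Fin P.d ⊕ Fin P.m) (Unit ⊕ Fin P.m) ℂ :=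
  Matrix.fromBlocks
    (Matrix.of fun k (_ : Unit) => P.target k)
    (Matrix.of fun k i => P.input i k)
    0
    (Matrix.of fun i i' => if i = i' ∧ ¬ P.avail x i then 1 else 0)

/-- The weighted adjacency matrix `A_{G_P(x)}` of the span-program graph. -/
noncomputable def adjMat (P : SpanProgram n) (x : Fin n → Bool) :
    Matrix P.vtx P.vtx ℂ :=
  Matrix.fromBlocks 0 (P.biadj x) (P.biadj x)ᴴ 0

/-- The unit vector on the output vertex `μ₀`. -/
noncomputable def outVec (P : SpanProgram n) : EuclideanSpace ℂ P.vtx :=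
  EuclideanSpace.single (Sum.inr (Sum.inl ())) 1

end SpanProgram

/-!
Positive case: a witness gives `A Π(x) w = t`, so `ψ = (0, (1, −Π(x) w))` lies in the kernel of
`A_{G_P(x)}` (the `t`-column cancels `A Π(x) w`, and `1 − Π(x)` kills `Π(x) w`) and has overlap `1`
with the output vertex, while `‖ψ‖² ≤ 1 + ‖w‖²`.

Negative case: `Ψ = ((w', −A† w'), 0)` is mapped by `A_{G_P(x)}` to the output vector, because
`⟨t, w'⟩ = 1` and `A† w' − (1 − Π(x)) A† w' = Π(x) A† w' = 0`. For a self-adjoint operator the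
overlap of `AΨ` with an eigenvector of eigenvalue `ρ` is `ρ` times that of `Ψ`, so by Parseval the
weight of the output vector on eigenvalues `|ρ| ≤ Υ` is at most `Υ² ‖Ψ‖² = Υ² (‖w'‖² + ‖A† w'‖²)`
(the effective spectral gap lemma).
-/

open scoped InnerProductSpace

section SpectralGap

variable {𝕜 E ι : Type*} [RCLike 𝕜] [NormedAddCommGroup E] [InnerProductSpace 𝕜 E] [Fintype ι]

theorem LinearMap.IsSymmetric.inner_apply_eq_of_apply_eq_smul {T : E →ₗ[𝕜] E}
    (hT : T.IsSymmetric) {v : E} {r : ℝ} (hv : T v = (r : 𝕜) • v) (ψ : E) :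
    ⟪v, T ψ⟫_𝕜 = r * ⟪v, ψ⟫_𝕜 := by
  rw [← hT, hv, inner_smul_left, RCLike.conj_ofReal]

theorem LinearMap.IsSymmetric.sum_sq_norm_inner_apply_le_of_abs_eigenvalue_le
    {T : E →ₗ[𝕜] E} (hT : T.IsSymmetric) (b : OrthonormalBasis ι 𝕜 E) (ρ : ι → ℝ)
    (hb : ∀ α, T (b α) = (ρ α : 𝕜) • b α) (ψ : E) (Υ : ℝ) :
    ∑ α, (if |ρ α| ≤ Υ then ‖⟪b α, T ψ⟫_𝕜‖ ^ 2 else 0) ≤ Υ ^ 2 * ‖ψ‖ ^ 2 := by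
  have hterm (α : ι) :
      (if |ρ α| ≤ Υ then ‖⟪b α, T ψ⟫_𝕜‖ ^ 2 else 0) ≤ Υ ^ 2 * ‖⟪b α, ψ⟫_𝕜‖ ^ 2 := by
    split_ifs with hα
    · rw [hT.inner_apply_eq_of_apply_eq_smul (hb α), norm_mul, RCLike.norm_ofReal, mul_pow]
      gcongr
    · positivity
  calc _ ≤ ∑ α, Υ ^ 2 * ‖⟪b α, ψ⟫_𝕜‖ ^ 2 := Finset.sum_le_sum fun α _ => hterm α
    _ = Υ ^ 2 * ‖ψ‖ ^ 2 := by rw [← Finset.mul_sum, b.sum_sq_norm_inner_right]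

end SpectralGap

namespace SpanProgram

variable {n : ℕ} (P : SpanProgram n) (x : Fin n → Bool)

/-- `Π(x)`. -/
def proj (w : Fin P.m → ℂ) : Fin P.m → ℂ := fun i => if P.avail x i then w i else 0

/-- `1 − Π(x)`. -/
def projCompl (w : Fin P.m → ℂ) : Fin P.m → ℂ := fun i => if P.avail x i then 0 else w i

/-- `A†`. -/
noncomputable def inputAdjoint (v : EuclideanSpace ℂ (Fin P.d)) : Fin P.m → ℂ :=
  fun i => ⟪P.input i, v⟫

variable {P x}

theorem projCompl_proj (w : Fin P.m → ℂ) : P.projCompl x (P.proj x w) = 0 := by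
  ext i; simp only [projCompl, proj]; split_ifs <;> rfl

theorem norm_proj_le (w : Fin P.m → ℂ) (i : Fin P.m) : ‖P.proj x w i‖ ≤ ‖w i‖ := by
  unfold proj; split_ifs <;> simp

theorem projCompl_neg (w : Fin P.m → ℂ) : P.projCompl x (-w) = -P.projCompl x w := by
  ext i; simp only [projCompl, Pi.neg_apply]; split_ifs <;> simp

variable (P x)

theorem adjMat_isHermitian : (P.adjMat x).IsHermitian := by
  simp [IsHermitian, adjMat, fromBlocks_conjTranspose]

theorem adjMat_mulVec (v : P.vtx → ℂ) :
    P.adjMat x *ᵥ v = Sum.elim (P.biadj x *ᵥ (v ∘ Sum.inr)) ((P.biadj x)ᴴ *ᵥ (v ∘ Sum.inl)) := by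
  simp [adjMat, fromBlocks_mulVec]

theorem biadj_mulVec (c : ℂ) (φ : Fin P.m → ℂ) :
    P.biadj x *ᵥ Sum.elim (fun _ => c) φ =
      Sum.elim (WithLp.ofLp (c • P.target + ∑ i, φ i • P.input i)) (P.projCompl x φ) := by
  ext (k | i)
  · simp [biadj, mulVec, dotProduct, mul_comm]
  · simp [biadj, mulVec, dotProduct, projCompl, ite_and, ite_not]

theorem conjTranspose_biadj_mulVec (v : EuclideanSpace ℂ (Fin P.d)) (φ : Fin P.m → ℂ) :
    (P.biadj x)ᴴ *ᵥ Sum.elim (WithLp.ofLp v) φ =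
      Sum.elim (fun _ => ⟪P.target, v⟫) (P.inputAdjoint v + P.projCompl x φ) := by
  ext (u | i)
  · simp [biadj, mulVec, dotProduct, EuclideanSpace.inner_eq_star_dotProduct, mul_comm]
  · simp [biadj, mulVec, dotProduct, EuclideanSpace.inner_eq_star_dotProduct, inputAdjoint,
      projCompl, mul_comm, ite_and, ite_not, apply_ite (starRingEnd ℂ), mul_ite]

noncomputable def posWitnessVec (w : Fin P.m → ℂ) : EuclideanSpace ℂ P.vtx :=
  WithLp.toLp 2 (Sum.elim 0 (Sum.elim (fun _ => 1) (-P.proj x w)))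

noncomputable def negWitnessVec (w' : EuclideanSpace ℂ (Fin P.d)) : EuclideanSpace ℂ P.vtx :=
  WithLp.toLp 2 (Sum.elim (Sum.elim (WithLp.ofLp w') (-P.inputAdjoint w')) 0)

variable {P x}

theorem adjMat_posWitnessVec {w : Fin P.m → ℂ} (hw : ∑ i, P.proj x w i • P.input i = P.target) :
    toEuclideanLin (P.adjMat x) (P.posWitnessVec x w) = 0 := by
  have h_target : (1 : ℂ) • P.target + ∑ i, (-P.proj x w) i • P.input i = 0 := by
    simp only [Pi.neg_apply, neg_smul, Finset.sum_neg_distrib, hw, one_smul, add_neg_cancel]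
  rw [toLpLin_apply, posWitnessVec, WithLp.ofLp_toLp, adjMat_mulVec, Sum.elim_comp_inl,
    Sum.elim_comp_inr, biadj_mulVec, h_target, projCompl_neg, projCompl_proj, mulVec_zero]
  ext (_ | _) <;> simp

theorem inner_outVec_posWitnessVec (w : Fin P.m → ℂ) : ⟪P.outVec, P.posWitnessVec x w⟫ = 1 := by
  simp [outVec, posWitnessVec, EuclideanSpace.inner_single_left]

theorem norm_sq_posWitnessVec_le (w : Fin P.m → ℂ) :
    ‖P.posWitnessVec x w‖ ^ 2 ≤ 1 + ∑ i, ‖w i‖ ^ 2 := by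
  simp only [EuclideanSpace.norm_sq_eq, Fintype.sum_sum_type, posWitnessVec]
  simp
  gcongr with i
  exact norm_proj_le w i

theorem adjMat_negWitnessVec {w' : EuclideanSpace ℂ (Fin P.d)} (h_target : ⟪P.target, w'⟫ = 1)
    (h_avail : ∀ i, P.avail x i → ⟪P.input i, w'⟫ = 0) :
    toEuclideanLin (P.adjMat x) (P.negWitnessVec w') = P.outVec := by
  have h_input : P.inputAdjoint w' + P.projCompl x (-P.inputAdjoint w') = 0 := by
    ext i
    by_cases hi : P.avail x i <;> simp [inputAdjoint, projCompl, hi, h_avail]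
  rw [toLpLin_apply, negWitnessVec, WithLp.ofLp_toLp, adjMat_mulVec, Sum.elim_comp_inl,
    Sum.elim_comp_inr, mulVec_zero, conjTranspose_biadj_mulVec, h_target, h_input]
  ext ((_ | _) | (_ | _)) <;> simp [outVec]

theorem norm_sq_negWitnessVec (w' : EuclideanSpace ℂ (Fin P.d)) :
    ‖P.negWitnessVec w'‖ ^ 2 = ‖w'‖ ^ 2 + ∑ i, ‖⟪P.input i, w'⟫‖ ^ 2 := by
  simp [EuclideanSpace.norm_sq_eq, Fintype.sum_sum_type, negWitnessVec, inputAdjoint]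

end SpanProgram

/-- spectral analysis of the span-program graph, non-black-box version.
(i) If `f_P(x) = 1` with witness `w` (i.e. `A Π(x) w = t`), then `A_{G_P(x)}` has an
eigenvalue-zero eigenvector whose squared relative overlap on the output vertex is at least
`1/(1 + ‖w‖²)`.  (ii) If `f_P(x) = 0` with witness `w'` (i.e. `⟪t, w'⟫ = 1` and
`Π(x) A† w' = 0`), then for any orthonormal eigenbasis of `A_{G_P(x)}` with eigenvalues `ρ α`
and any `Υ ≥ 0`, the squared overlap of the output vertex on eigenvectors with `|ρ α| ≤ Υ` is
at most `8Υ²(‖w'‖² + ‖A† w'‖²)`. -/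
theorem spanProgram_graph_spectral_analysis (n : ℕ) (P : SpanProgram n) (x : Fin n → Bool) :
    -- (i)
    (P.eval x →
      ∀ w : Fin P.m → ℂ,
        (∑ i, (if P.avail x i then w i else 0) • P.input i = P.target) →
        ∃ ψ : EuclideanSpace ℂ P.vtx,
          Matrix.toEuclideanLin (P.adjMat x) ψ = 0 ∧
          1 / (1 + ∑ i, ‖w i‖ ^ 2) ≤ ‖⟪P.outVec, ψ⟫‖ ^ 2 / ‖ψ‖ ^ 2) ∧
    -- (ii)
    (¬ P.eval x →
      ∀ w' : EuclideanSpace ℂ (Fin P.d),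
        ⟪P.target, w'⟫ = 1 →
        (∀ i, P.avail x i → ⟪P.input i, w'⟫ = 0) →
        ∀ (ι : Type) [Fintype ι] (b : OrthonormalBasis ι ℂ (EuclideanSpace ℂ P.vtx))
          (ρ : ι → ℝ),
          (∀ α, Matrix.toEuclideanLin (P.adjMat x) (b α) = (ρ α : ℂ) • b α) →
          ∀ Υ : ℝ, 0 ≤ Υ →
            ∑ α, (if |ρ α| ≤ Υ then ‖⟪b α, P.outVec⟫‖ ^ 2 else 0)
              ≤ 8 * Υ ^ 2 * (‖w'‖ ^ 2 + ∑ i, ‖⟪P.input i, w'⟫‖ ^ 2)) := by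
  refine ⟨fun _ w hw => ⟨P.posWitnessVec x w, P.adjMat_posWitnessVec hw, ?_⟩,
    fun _ w' h_target h_avail ι _ b ρ hb Υ _ => ?_⟩
  · have hψ : P.posWitnessVec x w ≠ 0 := fun h => by
      simpa [h] using P.inner_outVec_posWitnessVec (x := x) w
    rw [P.inner_outVec_posWitnessVec, norm_one, one_pow]
    exact one_div_le_one_div_of_le (by positivity) (P.norm_sq_posWitnessVec_le w)
  · have hT := isSymmetric_toEuclideanLin_iff.mpr (P.adjMat_isHermitian x)
    rw [← P.adjMat_negWitnessVec h_target h_avail]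
    calc _ ≤ Υ ^ 2 * ‖P.negWitnessVec w'‖ ^ 2 :=
          hT.sum_sq_norm_inner_apply_le_of_abs_eigenvalue_le b ρ hb _ Υ
      _ ≤ 8 * Υ ^ 2 * (‖w'‖ ^ 2 + ∑ i, ‖⟪P.input i, w'⟫‖ ^ 2) := by
          rw [P.norm_sq_negWitnessVec, mul_assoc]
          exact le_mul_of_one_le_left (by positivity) (by norm_num)
end
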